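/- Let p > 1 be real and C ∈ (0,1). Then there exists a unique z ∈ (0,1) such that ⌊z⁻¹⌋·z^p + (1 − ⌊z⁻¹⌋·z)^p = C. -/

import Mathlib

/-!
Where `⌊z⁻¹⌋ = n`, i.e. on the piece `z ∈ ((n + 1)⁻¹, n⁻¹]`, the left-hand side is
`n z^p + (1 - n z)^p`. Its derivative `n p (z^(p-1) - (1 - n z)^(p-1))` is positive there, because
the remainder `1 - n z` is shorter than `z`, and its values at the ends of the piece are
`(n + 1)^(1-p)` and `n^(1-p)`. So the pieces map strictly increasingly onto the consecutive
intervals `((n + 1)^(1-p), n^(1-p)]`, which tile `(0, 1]`; the value `1` is taken only at `z = 1`.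
-/

open Real Set

/-- The sum of the `p`-th powers of the parts when `[0, 1]` is cut into `c` parts of length `z`
and a remainder. -/
noncomputable def greedyPowSum (p c z : ℝ) : ℝ := c * z ^ p + (1 - c * z) ^ p

lemma hasDerivAt_greedyPowSum {p : ℝ} (hp : 1 ≤ p) (c x : ℝ) :
    HasDerivAt (greedyPowSum p c) (c * p * (x ^ (p - 1) - (1 - c * x) ^ (p - 1))) x := by
  have hlin : HasDerivAt (fun z : ℝ => 1 - c * z) (-c) x := by
    simpa using ((hasDerivAt_id x).const_mul c).const_sub 1
  exact (((hasDerivAt_rpow_const (Or.inr hp)).const_mul c).add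
    ((hasDerivAt_rpow_const (Or.inr hp)).comp x hlin)).congr_deriv (by ring)

lemma continuous_greedyPowSum {p : ℝ} (hp : 0 ≤ p) (c : ℝ) : Continuous (greedyPowSum p c) :=
  (continuous_const.mul (continuous_rpow_const hp)).add
    ((continuous_rpow_const hp).comp (continuous_const.sub (continuous_const_mul c)))

lemma greedyPowSum_strictMonoOn {p c : ℝ} (hp : 1 < p) (hc : 0 < c) :
    StrictMonoOn (greedyPowSum p c) (Icc (c + 1)⁻¹ c⁻¹) := by
  refine strictMonoOn_of_deriv_pos (convex_Icc _ _)
    (continuous_greedyPowSum (by linarith) c).continuousOn ?_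
  intro x hx
  rw [interior_Icc] at hx
  obtain ⟨hlow, hhigh⟩ := hx
  rw [(hasDerivAt_greedyPowSum hp.le c x).deriv]
  rw [inv_lt_iff_one_lt_mul₀' (by linarith)] at hlow
  rw [← mul_one c⁻¹, lt_inv_mul_iff₀ hc] at hhigh
  have hrem : (1 - c * x) ^ (p - 1) < x ^ (p - 1) :=
    rpow_lt_rpow (by linarith) (by linarith) (by linarith)
  exact mul_pos (mul_pos hc (by linarith)) (sub_pos.2 hrem)

lemma mul_inv_rpow_eq_rpow_one_sub {c : ℝ} (hc : 0 < c) (p : ℝ) : c * c⁻¹ ^ p = c ^ (1 - p) := by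
  rw [inv_rpow hc.le, ← rpow_neg hc.le, rpow_sub hc, rpow_one, rpow_neg hc.le, div_eq_mul_inv]

lemma greedyPowSum_inv {p c : ℝ} (hp : p ≠ 0) (hc : 0 < c) :
    greedyPowSum p c c⁻¹ = c ^ (1 - p) := by
  rw [greedyPowSum, mul_inv_cancel₀ hc.ne', sub_self, zero_rpow hp, add_zero,
    mul_inv_rpow_eq_rpow_one_sub hc]

lemma greedyPowSum_inv_add_one {c : ℝ} (hc : 0 < c) (p : ℝ) :
    greedyPowSum p c (c + 1)⁻¹ = (c + 1) ^ (1 - p) := by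
  have hrem : 1 - c * (c + 1)⁻¹ = (c + 1)⁻¹ := by field_simp; ring
  rw [greedyPowSum, hrem, ← mul_inv_rpow_eq_rpow_one_sub (by linarith : 0 < c + 1)]
  ring

lemma greedyPowSum_mem_Ioc {p c z : ℝ} (hp : 1 < p) (hc : 0 < c) (hz : z ∈ Ioc (c + 1)⁻¹ c⁻¹) :
    greedyPowSum p c z ∈ Ioc ((c + 1) ^ (1 - p)) (c ^ (1 - p)) := by
  have hmono := greedyPowSum_strictMonoOn hp hc
  have hends : (c + 1)⁻¹ ≤ c⁻¹ := hz.1.le.trans hz.2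
  rw [← greedyPowSum_inv_add_one hc, ← greedyPowSum_inv (by linarith) hc]
  exact ⟨hmono ⟨le_rfl, hends⟩ (Ioc_subset_Icc_self hz) hz.1,
    hmono.monotoneOn (Ioc_subset_Icc_self hz) ⟨hends, le_rfl⟩ hz.2⟩

lemma Int.floor_inv_eq_iff {z : ℝ} {n : ℤ} (hz : 0 < z) (hn : 0 < n) :
    ⌊z⁻¹⌋ = n ↔ z ∈ Ioc ((n + 1 : ℝ)⁻¹) (n : ℝ)⁻¹ := by
  have hn' : (0 : ℝ) < n := by exact_mod_cast hn
  rw [Int.floor_eq_iff, le_inv_comm₀ hn' hz, inv_lt_comm₀ hz (by linarith), mem_Ioc, and_comm]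

lemma Int.one_le_floor_inv {z : ℝ} (hz : z ∈ Ioc 0 1) : 1 ≤ ⌊z⁻¹⌋ :=
  Int.le_floor.2 (by exact_mod_cast one_le_inv₀ hz.1 |>.2 hz.2)

lemma greedyPowSum_floor_inv_strictMonoOn {p : ℝ} (hp : 1 < p) :
    StrictMonoOn (fun z : ℝ => greedyPowSum p ⌊z⁻¹⌋ z) (Ioc 0 1) := by
  intro z₁ hz₁ z₂ hz₂ hlt
  have hn₁ : (0 : ℝ) < ⌊z₁⁻¹⌋ := Int.cast_pos.2 (Int.one_le_floor_inv hz₁)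
  have hn₂ : (0 : ℝ) < ⌊z₂⁻¹⌋ := Int.cast_pos.2 (Int.one_le_floor_inv hz₂)
  have hmem₁ := (Int.floor_inv_eq_iff hz₁.1 (Int.one_le_floor_inv hz₁)).1 rfl
  have hmem₂ := (Int.floor_inv_eq_iff hz₂.1 (Int.one_le_floor_inv hz₂)).1 rfl
  have hfloor : ⌊z₂⁻¹⌋ ≤ ⌊z₁⁻¹⌋ := Int.floor_le_floor ((inv_le_inv₀ hz₂.1 hz₁.1).2 hlt.le)
  rcases hfloor.eq_or_lt with heq | hfloor
  · dsimp only
    rw [heq] at hmem₂ ⊢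
    exact greedyPowSum_strictMonoOn hp hn₁ (Ioc_subset_Icc_self hmem₁)
      (Ioc_subset_Icc_self hmem₂) hlt
  · calc greedyPowSum p ⌊z₁⁻¹⌋ z₁ ≤ (⌊z₁⁻¹⌋ : ℝ) ^ (1 - p) := (greedyPowSum_mem_Ioc hp hn₁ hmem₁).2
      _ ≤ ((⌊z₂⁻¹⌋ : ℝ) + 1) ^ (1 - p) :=
        rpow_le_rpow_of_nonpos (by linarith) (by exact_mod_cast hfloor) (by linarith)
      _ < greedyPowSum p ⌊z₂⁻¹⌋ z₂ := (greedyPowSum_mem_Ioc hp hn₂ hmem₂).1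

lemma exists_int_rpow_one_sub_mem_Ioc {p C : ℝ} (hp : 1 < p) (hC : C ∈ Ioo 0 1) :
    ∃ n : ℤ, 0 < n ∧ C ∈ Ioc (((n : ℝ) + 1) ^ (1 - p)) ((n : ℝ) ^ (1 - p)) := by
  set t := C ^ (1 - p)⁻¹
  have ht : 1 < t := one_lt_rpow_of_pos_of_lt_one_of_neg hC.1 hC.2 (inv_lt_zero.2 (by linarith))
  have htC : t ^ (1 - p) = C := rpow_inv_rpow hC.1.le (by linarith)
  have hn : (0 : ℝ) < ⌊t⌋ := Int.cast_pos.2 (Int.floor_pos.2 ht.le)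
  refine ⟨⌊t⌋, Int.cast_pos.1 hn, ?_, ?_⟩ <;> rw [← htC]
  · exact rpow_lt_rpow_of_neg (by linarith) (Int.lt_floor_add_one t) (by linarith)
  · exact rpow_le_rpow_of_nonpos hn (Int.floor_le t) (by linarith)

lemma exists_greedyPowSum_floor_inv_eq {p C : ℝ} (hp : 1 < p) (hC : C ∈ Ioo 0 1) :
    ∃ z ∈ Ioo 0 1, greedyPowSum p ⌊z⁻¹⌋ z = C := by
  obtain ⟨n, hn, hCn⟩ := exists_int_rpow_one_sub_mem_Ioc hp hC
  have hn' : (0 : ℝ) < n := Int.cast_pos.2 hn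
  have hends : ((n : ℝ) + 1)⁻¹ ≤ (n : ℝ)⁻¹ := inv_anti₀ hn' (by linarith)
  rw [← greedyPowSum_inv_add_one hn', ← greedyPowSum_inv (by linarith) hn'] at hCn
  obtain ⟨z, hz, hzC⟩ :=
    intermediate_value_Ioc hends (continuous_greedyPowSum (by linarith) n).continuousOn hCn
  have hz₀ : 0 < z := (inv_pos.2 (by linarith)).trans hz.1
  rw [← (Int.floor_inv_eq_iff hz₀ hn).2 hz] at hzC
  refine ⟨z, ⟨hz₀, ?_⟩, hzC⟩
  have hz₁ : z ≤ 1 := hz.2.trans (inv_le_one_of_one_le₀ (by exact_mod_cast hn))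
  refine hz₁.lt_of_ne ?_
  rintro rfl
  have hone : greedyPowSum p ⌊(1 : ℝ)⁻¹⌋ 1 = 1 := by
    simp [greedyPowSum, zero_rpow (by linarith : p ≠ 0)]
  exact hC.2.ne (hzC.symm.trans hone)

/-- For `p > 1` and `C ∈ (0,1)`, there is a unique `z ∈ (0,1)` with
`⌊z⁻¹⌋·z^p + (1 − ⌊z⁻¹⌋·z)^p = C`. -/
theorem floor_rpow_exists_unique (p C : ℝ) (hp : 1 < p) (hC : C ∈ Set.Ioo (0:ℝ) 1) :
    ∃! z : ℝ, z ∈ Set.Ioo (0:ℝ) 1 ∧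
      (⌊z⁻¹⌋ : ℝ) * z ^ p + (1 - (⌊z⁻¹⌋ : ℝ) * z) ^ p = C := by
  obtain ⟨z, hz, hzC⟩ := exists_greedyPowSum_floor_inv_eq hp hC
  refine ⟨z, ⟨hz, hzC⟩, fun y ⟨hy, hyC⟩ => ?_⟩
  exact (greedyPowSum_floor_inv_strictMonoOn hp).injOn (Ioo_subset_Ioc_self hy)
    (Ioo_subset_Ioc_self hz) (hyC.trans hzC.symm)
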